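/- arXiv:2112.03026 — 5 statements merged into one kernel-verified Lean document; each statement's English description precedes it below -/
import Mathlib

section
/- The relation ≤_HZX is a total order on the set of IVIFNs: any two IVIFNs α and β satisfy α ≤_HZX β or β ≤_HZX α, and the relation is reflexive, antisymmetric, and transitive. -/
structure IVIFN where
  muL : ℝ
  muR : ℝ
  nuL : ℝ
  nuR : ℝ
  muL_nonneg : 0 ≤ muL
  mu_le : muL ≤ muR
  muR_le_one : muR ≤ 1
  nuL_nonneg : 0 ≤ nuL
  nu_le : nuL ≤ nuR
  nuR_le_one : nuR ≤ 1
  sum_le_one : muR + nuR ≤ 1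

noncomputable def Sf (a : IVIFN) : ℝ := (a.muL + a.muR) / 2 - (a.nuL + a.nuR) / 2
noncomputable def Hf (a : IVIFN) : ℝ := (a.muL + a.muR) / 2 + (a.nuL + a.nuR) / 2
noncomputable def E2 (a : IVIFN) : ℝ := (a.muR - a.muL + a.nuR - a.nuL) / 2
noncomputable def E3 (a : IVIFN) : ℝ := a.muR - a.muL

def ltHZX (a b : IVIFN) : Prop :=
  Sf a < Sf b ∨ (Sf a = Sf b ∧ (Hf a < Hf b ∨ (Hf a = Hf b ∧
    (E2 a < E2 b ∨ (E2 a = E2 b ∧ E3 a < E3 b)))))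

def leHZX (a b : IVIFN) : Prop := a = b ∨ ltHZX a b

/-! `≤_HZX` is the lexicographic order on `ℝ⁴` pulled back along `α ↦ (S, H, E₂, E₃)`,
which is injective because the four scores are invertible linear combinations of the
endpoints `μL, μR, νL, νR`. -/

noncomputable def hzxKey (a : IVIFN) : ℝ ×ₗ ℝ ×ₗ ℝ ×ₗ ℝ :=
  toLex (Sf a, toLex (Hf a, toLex (E2 a, E3 a)))

-- `μL + μR = S + H`, `νL + νR = H - S`, `μR - μL = E₃`, `νR - νL = 2 E₂ - E₃`.
theorem hzxKey_injective : Function.Injective hzxKey := by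
  rintro ⟨μL, μR, νL, νR⟩ ⟨μL', μR', νL', νR'⟩ h
  simp only [hzxKey, Sf, Hf, E2, E3, toLex_inj, Prod.mk.injEq] at h
  obtain ⟨hS, hH, hE₂, hE₃⟩ := h
  simp only [IVIFN.mk.injEq]
  refine ⟨?_, ?_, ?_, ?_⟩ <;> linarith

theorem ltHZX_iff_hzxKey_lt (a b : IVIFN) : ltHZX a b ↔ hzxKey a < hzxKey b := by
  simp only [ltHZX, hzxKey, Prod.Lex.toLex_lt_toLex]

theorem leHZX_iff_hzxKey_le (a b : IVIFN) : leHZX a b ↔ hzxKey a ≤ hzxKey b := by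
  rw [leHZX, ltHZX_iff_hzxKey_lt, le_iff_eq_or_lt, hzxKey_injective.eq_iff]

theorem leHZX_total_order :
    (∀ a b : IVIFN, leHZX a b ∨ leHZX b a) ∧
    (∀ a : IVIFN, leHZX a a) ∧
    (∀ a b : IVIFN, leHZX a b → leHZX b a → a = b) ∧
    (∀ a b c : IVIFN, leHZX a b → leHZX b c → leHZX a c) := by
  simp only [leHZX_iff_hzxKey_le]
  exact ⟨fun a b => le_total _ _, fun a => le_rfl,
    fun a b hab hba => hzxKey_injective (le_antisymm hab hba), fun a b c => le_trans⟩
end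

section
/- An IVIFN α is completely determined by the four values S(α), H(α), E2(α), E3(α): if two IVIFNs α, β satisfy S(α)=S(β), H(α)=H(β), E2(α)=E2(β), and E3(α)=E3(β), then α = β. -/
/-! The endpoints are recovered linearly from the indices: `S + H` and `H - S` are the sums of the
endpoints of the membership and non-membership intervals, `E3` and `2 E2 - E3` their lengths. -/

attribute [ext] IVIFN

namespace IVIFN

theorem muL_eq (a : IVIFN) : a.muL = (Sf a + Hf a - E3 a) / 2 := by
  simp only [Sf, Hf, E3]; ring

theorem muR_eq (a : IVIFN) : a.muR = (Sf a + Hf a + E3 a) / 2 := by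
  simp only [Sf, Hf, E3]; ring

theorem nuL_eq (a : IVIFN) : a.nuL = (Hf a - Sf a - 2 * E2 a + E3 a) / 2 := by
  simp only [Sf, Hf, E2, E3]; ring

theorem nuR_eq (a : IVIFN) : a.nuR = (Hf a - Sf a + 2 * E2 a - E3 a) / 2 := by
  simp only [Sf, Hf, E2, E3]; ring

end IVIFN

theorem IVIFN_determined (a b : IVIFN)
    (hS : Sf a = Sf b) (hH : Hf a = Hf b) (hE2 : E2 a = E2 b) (hE3 : E3 a = E3 b) :
    a = b := by
  ext
  · rw [a.muL_eq, b.muL_eq, hS, hH, hE3]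
  · rw [a.muR_eq, b.muR_eq, hS, hH, hE3]
  · rw [a.nuL_eq, b.nuL_eq, hS, hH, hE2, hE3]
  · rw [a.nuR_eq, b.nuR_eq, hS, hH, hE2, hE3]
end

section
/- Let ξ₁, ξ₂, ξ₃, ξ₄ be reals satisfying (ξ₁+ξ₂)/2 − ξ₄/2 ≥ 0, (ξ₂−ξ₁)/2 − (2ξ₃−ξ₄)/2 ≥ 0, ξ₂ + ξ₃ ≤ 1, 0 ≤ ξ₄ ≤ 2ξ₃. Then β = ⟨[(ξ₁+ξ₂−ξ₄)/2,(ξ₁+ξ₂+ξ₄)/2],[(ξ₂−ξ₁)/2−(2ξ₃−ξ₄)/2,(ξ₂−ξ₁)/2+(2ξ₃−ξ₄)/2]⟩ is an IVIFN with S(β) = ξ₁, H(β) = ξ₂, E2(β) = ξ₃, and E3(β) = ξ₄. -/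
/-! The map (μL, μR, νL, νR) ↦ (S, H, E2, E3) is an invertible linear map, and β is the preimage
of (ξ₁, ξ₂, ξ₃, ξ₄). The hypotheses are the IVIFN constraints read through this inverse; in
particular μR + νR = ξ₂ + ξ₃. -/

namespace IVIFN

def mk' (muL muR nuL nuR : ℝ) (muL_nonneg : 0 ≤ muL) (mu_le : muL ≤ muR) (nuL_nonneg : 0 ≤ nuL)
    (nu_le : nuL ≤ nuR) (sum_le_one : muR + nuR ≤ 1) : IVIFN where
  muL := muL
  muR := muR
  nuL := nuL
  nuR := nuR
  muL_nonneg := muL_nonneg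
  mu_le := mu_le
  muR_le_one := by linarith
  nuL_nonneg := nuL_nonneg
  nu_le := nu_le
  nuR_le_one := by linarith
  sum_le_one := sum_le_one

section OfScores

variable (ξ₁ ξ₂ ξ₃ ξ₄ : ℝ) (hμ : ξ₄ ≤ ξ₁ + ξ₂) (hν : 2 * ξ₃ - ξ₄ ≤ ξ₂ - ξ₁)
  (hsum : ξ₂ + ξ₃ ≤ 1) (hE3 : 0 ≤ ξ₄) (hE3E2 : ξ₄ ≤ 2 * ξ₃)

noncomputable def ofScores : IVIFN :=
  mk' ((ξ₁ + ξ₂ - ξ₄) / 2) ((ξ₁ + ξ₂ + ξ₄) / 2)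
    ((ξ₂ - ξ₁) / 2 - (2 * ξ₃ - ξ₄) / 2) ((ξ₂ - ξ₁) / 2 + (2 * ξ₃ - ξ₄) / 2)
    (by linarith) (by linarith) (by linarith) (by linarith) (by linarith)

theorem Sf_ofScores : Sf (ofScores ξ₁ ξ₂ ξ₃ ξ₄ hμ hν hsum hE3 hE3E2) = ξ₁ := by
  simp only [Sf, ofScores, mk']; ring

theorem Hf_ofScores : Hf (ofScores ξ₁ ξ₂ ξ₃ ξ₄ hμ hν hsum hE3 hE3E2) = ξ₂ := by
  simp only [Hf, ofScores, mk']; ring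

theorem E2_ofScores : E2 (ofScores ξ₁ ξ₂ ξ₃ ξ₄ hμ hν hsum hE3 hE3E2) = ξ₃ := by
  simp only [E2, ofScores, mk']; ring

theorem E3_ofScores : E3 (ofScores ξ₁ ξ₂ ξ₃ ξ₄ hμ hν hsum hE3 hE3E2) = ξ₄ := by
  simp only [E3, ofScores, mk']; ring

end OfScores

end IVIFN

open IVIFN in
theorem exists_IVIFN_with_values (ξ₁ ξ₂ ξ₃ ξ₄ : ℝ)
    (h1 : (ξ₁ + ξ₂) / 2 - ξ₄ / 2 ≥ 0)
    (h2 : (ξ₂ - ξ₁) / 2 - (2 * ξ₃ - ξ₄) / 2 ≥ 0)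
    (h3 : ξ₂ + ξ₃ ≤ 1) (h4 : 0 ≤ ξ₄) (h5 : ξ₄ ≤ 2 * ξ₃) :
    ∃ β : IVIFN, β.muL = (ξ₁ + ξ₂ - ξ₄) / 2 ∧ β.muR = (ξ₁ + ξ₂ + ξ₄) / 2 ∧
      β.nuL = (ξ₂ - ξ₁) / 2 - (2 * ξ₃ - ξ₄) / 2 ∧
      β.nuR = (ξ₂ - ξ₁) / 2 + (2 * ξ₃ - ξ₄) / 2 ∧
      Sf β = ξ₁ ∧ Hf β = ξ₂ ∧ E2 β = ξ₃ ∧ E3 β = ξ₄ := by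
  have hμ : ξ₄ ≤ ξ₁ + ξ₂ := by linarith
  have hν : 2 * ξ₃ - ξ₄ ≤ ξ₂ - ξ₁ := by linarith
  exact ⟨ofScores ξ₁ ξ₂ ξ₃ ξ₄ hμ hν h3 h4 h5, rfl, rfl, rfl, rfl,
    Sf_ofScores .., Hf_ofScores .., E2_ofScores .., E3_ofScores ..⟩
end

section
/- The set of all IVIFNs equipped with the total order ≤_HZX is a complete lattice (hence a complete chain): every nonempty subset has a least upper bound and a greatest lower bound with respect to ≤_HZX. -/
/-!
The order `≤_HZX` is the pullback of the lexicographic order on `ℝ⁴` along the injective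
linear map `a ↦ (S a, H a, E₂ a, E₃ a)`, and the image of this map is compact. Inside a
compact subset `K` of a lexicographic product `α × β`, a least upper bound of `A ⊆ K` is
found one coordinate at a time: take the least upper bound `s` of the first coordinates of `A`
among the first coordinates of `K`, then a least upper bound in the (compact, nonempty) slice
of `K` over `s` of the points of `A` lying in that slice (if there are none, this is the
minimum of the slice). Greatest lower bounds are least upper bounds of the set of lower bounds.
-/

open Set

def HasLUBInCompacts (X : Type*) [TopologicalSpace X] (r : X → X → Prop) : Prop :=
  ∀ K : Set X, IsCompact K → K.Nonempty → ∀ A ⊆ K,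
    ∃ u ∈ K, (∀ a ∈ A, r a u) ∧ ∀ v ∈ K, (∀ a ∈ A, r a v) → r u v

theorem hasLUBInCompacts_le (α : Type*) [LinearOrder α] [TopologicalSpace α]
    [OrderClosedTopology α] : HasLUBInCompacts α (· ≤ ·) := by
  intro K hK hne A hAK
  obtain ⟨m, hmK, hm⟩ := hK.exists_isGreatest hne
  have hU : (upperBounds A ∩ K).Nonempty := ⟨m, fun a ha => hm (hAK ha), hmK⟩
  have hclosed : IsClosed (upperBounds A) := by
    rw [show upperBounds A = ⋂ a ∈ A, Ici a by ext; simp [upperBounds]]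
    exact isClosed_biInter fun a _ => isClosed_Ici
  obtain ⟨u, ⟨huA, huK⟩, hleast⟩ := (hK.inter_left hclosed).exists_isLeast hU
  exact ⟨u, huK, huA, fun v hvK hvA => hleast ⟨hvA, hvK⟩⟩

theorem HasLUBInCompacts.prodLex {α β : Type*} [LinearOrder α] [TopologicalSpace α]
    [OrderClosedTopology α] [TopologicalSpace β] {r : β → β → Prop}
    (hβ : HasLUBInCompacts β r) : HasLUBInCompacts (α × β) (Prod.Lex (· < ·) r) := by
  intro K hK hne A hAK
  obtain ⟨s, ⟨p, hpK, rfl⟩, hsA, hsleast⟩ := hasLUBInCompacts_le α (Prod.fst '' K)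
    (hK.image continuous_fst) (hne.image _) (Prod.fst '' A) (image_mono hAK)
  set F : Set (α × β) := Prod.fst ⁻¹' {p.1}
  have hKF : IsCompact (Prod.snd '' (K ∩ F)) :=
    (hK.inter_right (isClosed_singleton.preimage continuous_fst)).image continuous_snd
  obtain ⟨t, ⟨q, ⟨hqK, hqF⟩, rfl⟩, htA, htleast⟩ :=
    hβ _ hKF ⟨p.2, p, ⟨hpK, rfl⟩, rfl⟩ (Prod.snd '' (A ∩ F))
      (image_mono (inter_subset_inter_left _ hAK))
  have hq : (p.1, q.2) = q := Prod.ext hqF.symm rfl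
  refine ⟨(p.1, q.2), hq ▸ hqK, fun a ha => ?_, fun v hvK hvA => ?_⟩
  · rcases (hsA _ ⟨a, ha, rfl⟩).lt_or_eq with hlt | heq
    · exact Prod.Lex.left _ _ hlt
    · rw [← Prod.mk.eta (p := a), heq]
      exact Prod.Lex.right _ (htA _ ⟨a, ⟨ha, heq⟩, rfl⟩)
  · have hv₁ : p.1 ≤ v.1 := hsleast _ ⟨v, hvK, rfl⟩ <| by
      rintro _ ⟨a, ha, rfl⟩
      rcases Prod.lex_def.mp (hvA a ha) with hlt | ⟨heq, -⟩
      exacts [hlt.le, heq.le]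
    rcases hv₁.lt_or_eq with hlt | heq
    · exact Prod.Lex.left _ _ hlt
    · rw [← Prod.mk.eta (p := v), ← heq]
      refine Prod.Lex.right _ (htleast _ ⟨v, ⟨hvK, heq.symm⟩, rfl⟩ ?_)
      rintro _ ⟨a, ⟨ha, haF⟩, rfl⟩
      rcases Prod.lex_def.mp (hvA a ha) with hlt | ⟨-, hle⟩
      · exact ((show a.1 = v.1 from haF.trans heq).not_lt hlt).elim
      · exact hle

namespace IVIFN

def coords (a : IVIFN) : ℝ × ℝ × ℝ × ℝ := (a.muL, a.muR, a.nuL, a.nuR)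

theorem isCompact_range_coords : IsCompact (range coords) := by
  have hrange : range coords = {p : ℝ × ℝ × ℝ × ℝ | 0 ≤ p.1 ∧ p.1 ≤ p.2.1 ∧ p.2.1 ≤ 1 ∧
      0 ≤ p.2.2.1 ∧ p.2.2.1 ≤ p.2.2.2 ∧ p.2.2.2 ≤ 1 ∧ p.2.1 + p.2.2.2 ≤ 1} := by
    ext ⟨x, y, z, w⟩
    constructor
    · rintro ⟨a, ha⟩
      cases ha
      exact ⟨a.muL_nonneg, a.mu_le, a.muR_le_one, a.nuL_nonneg, a.nu_le, a.nuR_le_one,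
        a.sum_le_one⟩
    · rintro ⟨h₁, h₂, h₃, h₄, h₅, h₆, h₇⟩
      exact ⟨⟨x, y, z, w, h₁, h₂, h₃, h₄, h₅, h₆, h₇⟩, rfl⟩
  have hclosed : IsClosed (range coords) := by
    rw [hrange]
    simp only [ofPred_and]
    repeat' apply IsClosed.inter
    all_goals exact isClosed_le (by fun_prop) (by fun_prop)
  refine (isCompact_Icc (a := 0) (b := 1)).of_isClosed_subset hclosed ?_
  rintro _ ⟨a, rfl⟩
  have := a.muL_nonneg; have := a.mu_le; have := a.muR_le_one
  have := a.nuL_nonneg; have := a.nu_le; have := a.nuR_le_one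
  simp only [mem_Icc, Prod.le_def, coords, Prod.fst_zero, Prod.snd_zero, Prod.fst_one,
    Prod.snd_one]
  refine ⟨⟨?_, ?_, ?_, ?_⟩, ?_, ?_, ?_, ?_⟩ <;> linarith

noncomputable def key (a : IVIFN) : ℝ × ℝ × ℝ × ℝ := (Sf a, Hf a, E2 a, E3 a)

theorem isCompact_range_key : IsCompact (range key) := by
  have hkey : key = (fun p : ℝ × ℝ × ℝ × ℝ => ((p.1 + p.2.1) / 2 - (p.2.2.1 + p.2.2.2) / 2,
      (p.1 + p.2.1) / 2 + (p.2.2.1 + p.2.2.2) / 2, (p.2.1 - p.1 + p.2.2.2 - p.2.2.1) / 2,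
      p.2.1 - p.1)) ∘ coords := rfl
  rw [hkey, range_comp]
  exact isCompact_range_coords.image (by fun_prop)

theorem key_injective : Function.Injective key := by
  intro a b h
  simp only [key, Sf, Hf, E2, E3, Prod.mk.injEq] at h
  obtain ⟨hS, hH, hE₂, hE₃⟩ := h
  cases a
  cases b
  simp only [IVIFN.mk.injEq]
  refine ⟨?_, ?_, ?_, ?_⟩ <;> linarith

theorem leHZX_iff_lex {a b : IVIFN} :
    leHZX a b ↔
      Prod.Lex (· < ·) (Prod.Lex (· < ·) (Prod.Lex (· < ·) (· ≤ ·))) (key a) (key b) := by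
  rw [leHZX, ltHZX, ← key_injective.eq_iff]
  simp only [key, Prod.lex_def, Prod.mk.injEq, le_iff_lt_or_eq (a := E3 a)]
  tauto

theorem exists_lub_leHZX (Ω : Set IVIFN) :
    ∃ u, (∀ a ∈ Ω, leHZX a u) ∧ ∀ v, (∀ a ∈ Ω, leHZX a v) → leHZX u v := by
  have hlex :=
    (((hasLUBInCompacts_le ℝ).prodLex (α := ℝ)).prodLex (α := ℝ)).prodLex (α := ℝ)
  have hne : (range key).Nonempty :=
    range_nonempty_iff_nonempty.mpr ⟨⟨0, 0, 0, 0, le_rfl, le_rfl, zero_le_one, le_rfl, le_rfl,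
      zero_le_one, by norm_num⟩⟩
  obtain ⟨_, ⟨u, rfl⟩, hub, hleast⟩ :=
    hlex _ isCompact_range_key hne (key '' Ω) (image_subset_range _ _)
  simp only [forall_mem_image, forall_mem_range, ← leHZX_iff_lex] at hub hleast
  exact ⟨u, hub, hleast⟩

end IVIFN

theorem HZX_complete :
    ∀ Ω : Set IVIFN, Ω.Nonempty →
      (∃ u : IVIFN, (∀ a ∈ Ω, leHZX a u) ∧
        ∀ v : IVIFN, (∀ a ∈ Ω, leHZX a v) → leHZX u v) ∧
      (∃ l : IVIFN, (∀ a ∈ Ω, leHZX l a) ∧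
        ∀ m : IVIFN, (∀ a ∈ Ω, leHZX m a) → leHZX m l) := by
  intro Ω _
  refine ⟨IVIFN.exists_lub_leHZX Ω, ?_⟩
  obtain ⟨l, hub, hleast⟩ := IVIFN.exists_lub_leHZX {m | ∀ a ∈ Ω, leHZX m a}
  exact ⟨l, fun a ha => hleast a fun m hm => hm a ha, hub⟩
end

section
/- The set of all IVIFNs equipped with the order ≤_WLW is a complete chain, where ≤_WLW is the lexicographic order on (S, H, T, G) with T(α) = (μR−μL) − (νR−νL) the membership uncertainty index and G(α) = (μR−μL) + (νR−νL) the hesitation uncertainty index. -/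
noncomputable def Tf (a : IVIFN) : ℝ := (a.muR - a.muL) - (a.nuR - a.nuL)
noncomputable def Gf (a : IVIFN) : ℝ := (a.muR - a.muL) + (a.nuR - a.nuL)

def ltWLW (a b : IVIFN) : Prop :=
  Sf a < Sf b ∨ (Sf a = Sf b ∧ (Hf a < Hf b ∨ (Hf a = Hf b ∧
    (Tf a < Tf b ∨ (Tf a = Tf b ∧ Gf a < Gf b)))))

def leWLW (a b : IVIFN) : Prop := a = b ∨ ltWLW a b

open Set Function Topology

/-- For `A = ∅` this asks for a least element of `K`. -/
def HasRelLUBs {γ : Type*} [Preorder γ] (K : Set γ) : Prop :=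
  ∀ A ⊆ K, ∃ u, IsLeast (upperBounds A ∩ K) u

theorem IsCompact.hasRelLUBs {α : Type*} [ConditionallyCompleteLinearOrder α] [TopologicalSpace α]
    [OrderTopology α] {K : Set α} (hK : IsCompact K) (hne : K.Nonempty) : HasRelLUBs K := by
  intro A hAK
  rcases A.eq_empty_or_nonempty with rfl | hA
  · exact ⟨sInf K, by simpa using hK.isLeast_sInf hne⟩
  · have : Nonempty α := hne.to_type
    have hbdd : BddAbove A := hK.bddAbove.mono hAK
    refine ⟨sSup A, ⟨(isLUB_csSup hA hbdd).1, ?_⟩, fun v hv => csSup_le hA hv.1⟩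
    exact hK.isClosed.closure_subset_iff.2 hAK (csSup_mem_closure hA hbdd)

theorem HasRelLUBs.lex {α β : Type*} [LinearOrder α] [LinearOrder β] {K : Set (α ×ₗ β)}
    (hfst : HasRelLUBs ((fun p => (ofLex p).1) '' K))
    (hfiber : ∀ a ∈ (fun p => (ofLex p).1) '' K, HasRelLUBs {b | toLex (a, b) ∈ K}) :
    HasRelLUBs K := by
  intro A hAK
  obtain ⟨s, ⟨hs_ub, hsK⟩, hs_least⟩ := hfst _ (image_mono hAK)
  -- The part of `A` over `s` is empty if `s` is not attained; `t` is then the least point over `s`.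
  obtain ⟨t, ⟨ht_ub, htK⟩, ht_least⟩ := hfiber s hsK {b | toLex (s, b) ∈ A} fun b hb => hAK hb
  refine ⟨toLex (s, t), ⟨toLex.surjective.forall.2 fun ⟨a₁, a₂⟩ ha => ?_, htK⟩,
    toLex.surjective.forall.2 fun ⟨v₁, v₂⟩ ⟨hv_ub, hvK⟩ => ?_⟩
  · rcases (hs_ub (mem_image_of_mem _ ha)).lt_or_eq with h | rfl
    · exact Prod.Lex.toLex_le_toLex.2 (Or.inl h)
    · exact Prod.Lex.toLex_le_toLex.2 (Or.inr ⟨rfl, ht_ub ha⟩)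
  · have hsv : s ≤ v₁ := hs_least ⟨forall_mem_image.2 fun a ha => Prod.Lex.monotone_fst_ofLex
      (hv_ub ha), mem_image_of_mem _ hvK⟩
    rcases hsv.lt_or_eq with h | rfl
    · exact Prod.Lex.toLex_le_toLex.2 (Or.inl h)
    · refine Prod.Lex.toLex_le_toLex.2 (Or.inr ⟨rfl, ht_least ⟨fun b hb => ?_, hvK⟩⟩)
      simpa using Prod.Lex.toLex_le_toLex.1 (hv_ub hb)

section Compacts

variable {X α β : Type*} [TopologicalSpace X]

def HasRelLUBsOnCompacts [Preorder β] (g : X → β) : Prop :=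
  ∀ F : Set X, IsCompact F → F.Nonempty → HasRelLUBs (g '' F)

theorem Continuous.hasRelLUBsOnCompacts [ConditionallyCompleteLinearOrder α] [TopologicalSpace α]
    [OrderTopology α] {f : X → α} (hf : Continuous f) : HasRelLUBsOnCompacts f :=
  fun _ hF hne => (hF.image hf).hasRelLUBs (hne.image f)

theorem HasRelLUBsOnCompacts.lex [ConditionallyCompleteLinearOrder α] [TopologicalSpace α]
    [OrderTopology α] [LinearOrder β] {f : X → α} {g : X → β} (hf : Continuous f)
    (hg : HasRelLUBsOnCompacts g) : HasRelLUBsOnCompacts fun x => toLex (f x, g x) := by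
  intro F hF hne
  refine HasRelLUBs.lex ?_ ?_
  · rw [image_image]
    exact hf.hasRelLUBsOnCompacts F hF hne
  · rintro _ ⟨_, ⟨x, hx, rfl⟩, rfl⟩
    have hfiber : {b | toLex (f x, b) ∈ (fun x => toLex (f x, g x)) '' F} =
        g '' (F ∩ f ⁻¹' {f x}) := by
      ext b
      simp [and_assoc, eq_comm]
    change HasRelLUBs {b | toLex (f x, b) ∈ _}
    rw [hfiber]
    exact hg _ (hF.inter_right (isClosed_singleton.preimage hf)) ⟨x, ⟨hx, rfl⟩⟩

end Compacts

theorem OrderEmbedding.exists_isLUB_of_hasRelLUBs_range {X Y : Type*} [Preorder X] [Preorder Y]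
    (e : X ↪o Y) (h : HasRelLUBs (range e)) (A : Set X) : ∃ u, IsLUB A u := by
  obtain ⟨_, ⟨hub, u, rfl⟩, hleast⟩ := h (e '' A) (image_subset_range _ _)
  refine ⟨u, fun a ha => e.le_iff_le.1 (hub (mem_image_of_mem e ha)), fun v hv => ?_⟩
  exact e.le_iff_le.1
    (hleast ⟨forall_mem_image.2 fun a ha => e.le_iff_le.2 (hv ha), mem_range_self v⟩)

namespace IVIFN

instance : Inhabited IVIFN :=
  ⟨⟨0, 0, 0, 0, le_rfl, le_rfl, zero_le_one, le_rfl, le_rfl, zero_le_one, by norm_num⟩⟩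

def toVec (a : IVIFN) : ℝ × ℝ × ℝ × ℝ := (a.muL, a.muR, a.nuL, a.nuR)

theorem range_toVec : range toVec = {x | 0 ≤ x.1 ∧ x.1 ≤ x.2.1 ∧ x.2.1 ≤ 1 ∧ 0 ≤ x.2.2.1 ∧
    x.2.2.1 ≤ x.2.2.2 ∧ x.2.2.2 ≤ 1 ∧ x.2.1 + x.2.2.2 ≤ 1} := by
  ext x
  constructor
  · rintro ⟨a, rfl⟩
    exact ⟨a.muL_nonneg, a.mu_le, a.muR_le_one, a.nuL_nonneg, a.nu_le, a.nuR_le_one, a.sum_le_one⟩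
  · rintro ⟨h₁, h₂, h₃, h₄, h₅, h₆, h₇⟩
    exact ⟨⟨x.1, x.2.1, x.2.2.1, x.2.2.2, h₁, h₂, h₃, h₄, h₅, h₆, h₇⟩, rfl⟩

theorem isCompact_range_toVec : IsCompact (range toVec) := by
  rw [range_toVec]
  refine (isCompact_Icc (a := 0) (b := 1)).of_isClosed_subset ?_ ?_
  · simp only [ofPred_and]
    apply_rules [IsClosed.inter, isClosed_le] <;> fun_prop
  · rintro x ⟨h₁, h₂, h₃, h₄, h₅, h₆, h₇⟩
    simp only [mem_Icc, Prod.le_def, Prod.fst_zero, Prod.snd_zero, Prod.fst_one, Prod.snd_one]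
    refine ⟨⟨?_, ?_, ?_, ?_⟩, ?_, ?_, ?_, ?_⟩ <;> linarith

instance : TopologicalSpace IVIFN := .induced toVec inferInstance

instance : CompactSpace IVIFN :=
  ⟨by rw [(IsInducing.induced toVec).isCompact_iff, image_univ]; exact isCompact_range_toVec⟩

theorem continuous_toVec : Continuous toVec := continuous_induced_dom

@[fun_prop] theorem continuous_muL : Continuous muL := continuous_fst.comp continuous_toVec
@[fun_prop] theorem continuous_muR : Continuous muR :=
  (continuous_fst.comp continuous_snd).comp continuous_toVec
@[fun_prop] theorem continuous_nuL : Continuous nuL :=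
  (continuous_fst.comp (continuous_snd.comp continuous_snd)).comp continuous_toVec
@[fun_prop] theorem continuous_nuR : Continuous nuR :=
  (continuous_snd.comp (continuous_snd.comp continuous_snd)).comp continuous_toVec

noncomputable def wlwKey (a : IVIFN) : ℝ ×ₗ ℝ ×ₗ ℝ ×ₗ ℝ :=
  toLex (Sf a, toLex (Hf a, toLex (Tf a, Gf a)))

theorem wlwKey_injective : Injective wlwKey := by
  rintro ⟨μL, μR, νL, νR⟩ ⟨μL', μR', νL', νR'⟩ h
  simp only [wlwKey, toLex_inj, Prod.mk.injEq, Sf, Hf, Tf, Gf] at h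
  obtain ⟨hS, hH, hT, hG⟩ := h
  simp only [mk.injEq]
  refine ⟨?_, ?_, ?_, ?_⟩ <;> linarith

noncomputable instance : LinearOrder IVIFN := LinearOrder.lift' wlwKey wlwKey_injective

theorem leWLW_iff_le {a b : IVIFN} : leWLW a b ↔ a ≤ b := by
  have hlt : ltWLW a b ↔ wlwKey a < wlwKey b := by
    simp only [wlwKey, Prod.Lex.toLex_lt_toLex]
    rfl
  rw [le_iff_eq_or_lt, leWLW, hlt]
  rfl

theorem hasRelLUBs_range_wlwKey : HasRelLUBs (range wlwKey) := by
  have hkey : HasRelLUBsOnCompacts wlwKey := by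
    unfold wlwKey Sf Hf Tf Gf
    exact .lex (by fun_prop) (.lex (by fun_prop) (.lex (by fun_prop)
      (Continuous.hasRelLUBsOnCompacts (by fun_prop))))
  rw [← image_univ]
  exact hkey univ isCompact_univ univ_nonempty

theorem exists_isLUB (A : Set IVIFN) : ∃ u, IsLUB A u :=
  (OrderEmbedding.ofMapLEIff wlwKey fun _ _ => Iff.rfl).exists_isLUB_of_hasRelLUBs_range
    hasRelLUBs_range_wlwKey A

end IVIFN

theorem WLW_complete_chain :
    (∀ a : IVIFN, leWLW a a) ∧
    (∀ a b : IVIFN, leWLW a b → leWLW b a → a = b) ∧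
    (∀ a b c : IVIFN, leWLW a b → leWLW b c → leWLW a c) ∧
    (∀ a b : IVIFN, leWLW a b ∨ leWLW b a) ∧
    (∃ bot : IVIFN, ∀ a : IVIFN, leWLW bot a) ∧
    (∃ top : IVIFN, ∀ a : IVIFN, leWLW a top) ∧
    (∀ Ω : Set IVIFN, Ω.Nonempty →
      (∃ u : IVIFN, (∀ a ∈ Ω, leWLW a u) ∧
        ∀ v : IVIFN, (∀ a ∈ Ω, leWLW a v) → leWLW u v) ∧
      (∃ l : IVIFN, (∀ a ∈ Ω, leWLW l a) ∧
        ∀ m : IVIFN, (∀ a ∈ Ω, leWLW m a) → leWLW m l)) := by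
  simp only [IVIFN.leWLW_iff_le]
  refine ⟨le_refl, fun _ _ => le_antisymm, fun _ _ _ => le_trans, le_total, ?_, ?_, fun Ω _ => ?_⟩
  · obtain ⟨bot, -, hbot⟩ := IVIFN.exists_isLUB ∅
    exact ⟨bot, fun a => hbot fun _ h => h.elim⟩
  · obtain ⟨top, htop, -⟩ := IVIFN.exists_isLUB univ
    exact ⟨top, fun a => htop (mem_univ a)⟩
  · obtain ⟨u, hu⟩ := IVIFN.exists_isLUB Ω
    obtain ⟨l, hl⟩ := IVIFN.exists_isLUB (lowerBounds Ω)
    exact ⟨⟨u, hu⟩, ⟨l, isLUB_lowerBounds.1 hl⟩⟩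
end
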